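/- arXiv:1410.7526 — 5 statements merged into one kernel-verified Lean document; each statement's English description precedes it below -/
import Mathlib

section
/- If in a nondegenerate triangle ABC the internal angle bisector from A meets BC at A₁, the internal angle bisector from B meets AC at B₁, and the lengths satisfy dist A A₁ = dist B B₁, then the triangle is isosceles: dist C A = dist C B. (Lehmus–Steiner theorem.) -/
/-!
By the angle bisector theorem the foot of the bisector from `A` divides `BC` in the ratio
`c : b`, which gives the bisector length formula `l_a² (b + c)² = b c ((b + c)² - a²)`.
Equating `l_a` and `l_b` and clearing denominators leaves `c (b - a) Q(a, b, c) = 0` with `Q` a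
polynomial with positive coefficients, so `a = b`.
-/

open EuclideanGeometry
open scoped RealInnerProductSpace

namespace InnerProductGeometry

variable {V : Type*} [NormedAddCommGroup V] [InnerProductSpace ℝ V]

/-- Angle bisector theorem: a bisector of the angle between `u` and `v` meets the segment from
`u` to `v` at the point dividing it in the ratio `‖u‖ : ‖v‖`. -/
theorem norm_add_norm_smul_eq_of_angle_eq {u v : V} {t : ℝ} (huv : ‖v‖ • u ≠ ‖u‖ • v)
    (hw : (1 - t) • u + t • v ≠ 0)
    (h : angle u ((1 - t) • u + t • v) = angle ((1 - t) • u + t • v) v) :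
    (‖u‖ + ‖v‖) • ((1 - t) • u + t • v) = ‖v‖ • u + ‖u‖ • v := by
  set w := (1 - t) • u + t • v with hw_def
  have hu : u ≠ 0 := by rintro rfl; simp at huv
  have hv : v ≠ 0 := by rintro rfl; simp at huv
  have hinner_u : ⟪u, w⟫ = (1 - t) * ‖u‖ ^ 2 + t * ⟪u, v⟫ := by
    rw [inner_add_right, real_inner_smul_right, real_inner_smul_right,
      real_inner_self_eq_norm_sq]
  have hinner_v : ⟪w, v⟫ = (1 - t) * ⟪u, v⟫ + t * ‖v‖ ^ 2 := by
    rw [inner_add_left, real_inner_smul_left, real_inner_smul_left,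
      real_inner_self_eq_norm_sq]
  have hcos := congrArg Real.cos h
  rw [cos_angle, cos_angle, hinner_u, hinner_v,
    div_eq_div_iff (by positivity) (by positivity)] at hcos
  have hlt : ⟪u, v⟫ < ‖u‖ * ‖v‖ := inner_lt_norm_mul_iff_real.mpr huv
  have hratio : (1 - t) * ‖u‖ = t * ‖v‖ := by
    have hfactor : ((1 - t) * ‖u‖ - t * ‖v‖) * ((‖u‖ * ‖v‖ - ⟪u, v⟫) * ‖w‖) = 0 := by
      linear_combination hcos
    have hpos : 0 < (‖u‖ * ‖v‖ - ⟪u, v⟫) * ‖w‖ :=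
      mul_pos (sub_pos.mpr hlt) (norm_pos_iff.mpr hw)
    linear_combination (mul_eq_zero.mp hfactor).resolve_right hpos.ne'
  rw [hw_def, smul_add, smul_smul, smul_smul]
  congr 2 <;> linarith

theorem norm_norm_smul_add_norm_smul_sq (u v : V) :
    ‖‖v‖ • u + ‖u‖ • v‖ ^ 2 = ‖u‖ * ‖v‖ * ((‖u‖ + ‖v‖) ^ 2 - ‖u - v‖ ^ 2) := by
  rw [norm_add_sq_real, norm_sub_sq_real, norm_smul, norm_smul, real_inner_smul_left,
    real_inner_smul_right, Real.norm_of_nonneg (norm_nonneg _),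
    Real.norm_of_nonneg (norm_nonneg _)]
  ring

end InnerProductGeometry

theorem AffineIndependent.eq_zero_of_smul_sub_add_smul_sub_eq_zero {V : Type*} [AddCommGroup V]
    [Module ℝ V] {A B C : V} (h : AffineIndependent ℝ ![A, B, C]) {s t : ℝ}
    (hst : s • (B - A) + t • (C - A) = 0) : s = 0 ∧ t = 0 := by
  have := h.eq_zero_of_sum_eq_zero (s := Finset.univ) (w := ![-(s + t), s, t])
    (by simp [Fin.sum_univ_three]) (by simp [Fin.sum_univ_three]; rw [← hst]; module)
  exact ⟨this 1 (Finset.mem_univ _), this 2 (Finset.mem_univ _)⟩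

open InnerProductGeometry in
theorem EuclideanGeometry.dist_sq_mul_sq_of_angle_eq {V : Type*} [NormedAddCommGroup V]
    [InnerProductSpace ℝ V] {A B C D : V} (hABC : AffineIndependent ℝ ![A, B, C])
    (hD : D ∈ openSegment ℝ B C) (h : ∠ B A D = ∠ D A C) :
    dist A D ^ 2 * (dist A B + dist A C) ^ 2 =
      dist A B * dist A C * ((dist A B + dist A C) ^ 2 - dist B C ^ 2) := by
  have hpair := @hABC.eq_zero_of_smul_sub_add_smul_sub_eq_zero
  obtain ⟨t, -, rfl⟩ := (openSegment_eq_image ℝ B C ▸ hD :)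
  have hDA : (1 - t) • B + t • C - A = (1 - t) • (B - A) + t • (C - A) := by module
  have hw : (1 - t) • (B - A) + t • (C - A) ≠ 0 := fun h0 => by
    linarith [hpair h0]
  have huv : ‖C - A‖ • (B - A) ≠ ‖B - A‖ • (C - A) := fun h0 => by
    have hCA : C - A = 0 := norm_eq_zero.mp
      (hpair (s := ‖C - A‖) (t := -‖B - A‖) (by rw [neg_smul, h0, add_neg_cancel])).1
    exact one_ne_zero (hpair (s := 0) (t := 1) (by simp [hCA])).2
  have hbis := norm_add_norm_smul_eq_of_angle_eq huv hw (by rwa [← hDA])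
  simp only [dist_comm A, dist_eq_norm, ← sub_sub_sub_cancel_right B C A, hDA,
    ← norm_norm_smul_add_norm_smul_sq, ← hbis, norm_smul, Real.norm_of_nonneg
      (add_nonneg (norm_nonneg (B - A)) (norm_nonneg (C - A)))]
  ring

theorem eq_of_bisector_length_formulas {a b c d : ℝ} (ha : 0 < a) (hb : 0 < b) (hc : 0 < c)
    (hA : d ^ 2 * (c + b) ^ 2 = c * b * ((c + b) ^ 2 - a ^ 2))
    (hB : d ^ 2 * (c + a) ^ 2 = c * a * ((c + a) ^ 2 - b ^ 2)) : b = a := by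
  have hfactor : c * ((b - a) * (c ^ 4 + 2 * b * c ^ 3 + b ^ 2 * c ^ 2 + 2 * a * c ^ 3
      + 5 * a * b * c ^ 2 + 4 * a * b ^ 2 * c + a * b ^ 3 + a ^ 2 * c ^ 2
      + 4 * a ^ 2 * b * c + 2 * a ^ 2 * b ^ 2 + a ^ 3 * b)) = 0 := by
    linear_combination (c + b) ^ 2 * hB - (c + a) ^ 2 * hA
  have hpos : 0 < c ^ 4 + 2 * b * c ^ 3 + b ^ 2 * c ^ 2 + 2 * a * c ^ 3
      + 5 * a * b * c ^ 2 + 4 * a * b ^ 2 * c + a * b ^ 3 + a ^ 2 * c ^ 2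
      + 4 * a ^ 2 * b * c + 2 * a ^ 2 * b ^ 2 + a ^ 3 * b := by positivity
  have hba := (mul_eq_zero.mp ((mul_eq_zero.mp hfactor).resolve_left hc.ne')).resolve_right
    hpos.ne'
  linarith

/-- **Lehmus–Steiner theorem.** If in a nondegenerate triangle `ABC` the internal angle
bisector from `A` meets `BC` at `A₁`, the internal angle bisector from `B` meets `AC` at
`B₁`, and `dist A A₁ = dist B B₁`, then the triangle is isosceles: `dist C A = dist C B`. -/
theorem lehmus_steiner (A B C A₁ B₁ : EuclideanSpace ℝ (Fin 2))
    (hABC : AffineIndependent ℝ ![A, B, C])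
    (hA₁ : A₁ ∈ openSegment ℝ B C)
    (hbisA : ∠ B A A₁ = ∠ A₁ A C)
    (hB₁ : B₁ ∈ openSegment ℝ A C)
    (hbisB : ∠ A B B₁ = ∠ B₁ B C)
    (hlen : dist A A₁ = dist B B₁) :
    dist C A = dist C B := by
  have hBAC : AffineIndependent ℝ ![B, A, C] := by
    rw [affineIndependent_iff_not_collinear_set] at hABC ⊢
    rwa [Set.insert_comm]
  have hA := dist_sq_mul_sq_of_angle_eq hABC hA₁ hbisA
  have hB := dist_sq_mul_sq_of_angle_eq hBAC hB₁ hbisB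
  rw [← hlen, dist_comm B A] at hB
  have hdist {i j : Fin 3} (hij : i ≠ j) : 0 < dist (![A, B, C] i) (![A, B, C] j) :=
    dist_pos.mpr (hABC.injective.ne hij)
  rw [dist_comm C A, dist_comm C B]
  exact eq_of_bisector_length_formulas (hdist (i := 1) (j := 2) (by decide))
    (hdist (i := 0) (j := 2) (by decide)) (hdist (i := 0) (j := 1) (by decide)) hA hB
end

section
/- Let ABC be a nondegenerate triangle in the Euclidean plane, let A₁ be a point of the open segment BC and B₁ a point of the open segment AC, and suppose the segments AA₁ and BB₁ intersect at a point J that lies on the internal bisector of angle ACB (i.e. ∠ACJ = ∠JCB with J strictly inside the triangle, J ≠ C). If dist A A₁ = dist B B₁, then the triangle is isosceles: dist C A = dist C B. (Theorem 3.6, generalizing Lehmus–Steiner to equal cevians meeting on the bisector of the apex angle.) -/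
open EuclideanGeometry RealInnerProductSpace

lemma cevian_aux (a b p X X' : ℝ) (ha : 0 < a) (hb : 0 < b) (hp : p < a*b)
    (hX1 : X < 1) (hX'1 : X' < 1) (hXX : X' ≤ X) (hk : X*b ≤ X'*a) (hab : b < a) :
    b^2 - 2*X'*p + X'^2*a^2 < a^2 - 2*X*p + X^2*b^2 := by
  have h1 : 0 ≤ (X - X') * (a*b - p) := mul_nonneg (by linarith) (by linarith)
  have f1 : 0 < a - X*b + (b - X'*a) := by nlinarith
  have f2 : 0 < a - X*b - (b - X'*a) := by nlinarith
  nlinarith [mul_pos f1 f2]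

set_option maxHeartbeats 1000000 in
/-- **Theorem 3.6.** If in a nondegenerate triangle `ABC` the cevians `A A₁` (with
`A₁` on the open segment `BC`) and `B B₁` (with `B₁` on the open segment `AC`)
intersect at a point `J ≠ C` lying on the internal bisector of `∠ A C B`
(i.e. `∠ A C J = ∠ J C B`), and the cevians have equal lengths
`dist A A₁ = dist B B₁`, then the triangle is isosceles: `dist C A = dist C B`. -/
theorem isosceles_of_equal_cevians_meeting_on_bisector
    (A B C A₁ B₁ J : EuclideanSpace ℝ (Fin 2))
    (hABC : AffineIndependent ℝ ![A, B, C])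
    (hA₁ : A₁ ∈ openSegment ℝ B C)
    (hB₁ : B₁ ∈ openSegment ℝ A C)
    (hJA : J ∈ openSegment ℝ A A₁)
    (hJB : J ∈ openSegment ℝ B B₁)
    (hJC : J ≠ C)
    (hbis : ∠ A C J = ∠ J C B)
    (hlen : dist A A₁ = dist B B₁) :
    dist C A = dist C B := by
  obtain ⟨x, y, hx, hy, hxy, hxe⟩ := hA₁
  obtain ⟨x₂, y₂, hx₂, hy₂, hxy₂, hxe₂⟩ := hB₁
  obtain ⟨m, n, hm, hn, hmn, hme⟩ := hJA
  obtain ⟨m₂, n₂, hm₂, hn₂, hmn₂, hme₂⟩ := hJB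
  set u : EuclideanSpace ℝ (Fin 2) := A - C with hu_def
  set v : EuclideanSpace ℝ (Fin 2) := B - C with hv_def
  set w : EuclideanSpace ℝ (Fin 2) := J - C with hw_def
  -- linear independence of u, v
  have hli : ∀ r s : ℝ, r • u + s • v = 0 → r = 0 ∧ s = 0 := by
    intro r s hrs
    have h := (affineIndependent_iff_of_fintype (k := ℝ) ![A, B, C]).1 hABC ![r, s, -r-s]
      (by simp [Fin.sum_univ_three])
      (by
        rw [Finset.weightedVSub_eq_weightedVSubOfPoint_of_sum_eq_zero _ _ _
          (by simp [Fin.sum_univ_three]) C, Finset.weightedVSubOfPoint_apply]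
        simpa [Fin.sum_univ_three, vsub_eq_sub, hu_def, hv_def] using hrs)
    exact ⟨by simpa using h 0, by simpa using h 1⟩
  have hu0 : u ≠ 0 := by
    intro h
    have := (hli 1 0 (by simp [h])).1
    norm_num at this
  have hv0 : v ≠ 0 := by
    intro h
    have := (hli 0 1 (by simp [h])).2
    norm_num at this
  have hw0 : w ≠ 0 := sub_ne_zero.2 hJC
  set a : ℝ := ‖u‖ with ha_def
  set b : ℝ := ‖v‖ with hb_def
  set p : ℝ := ⟪u, v⟫ with hp_def
  have ha : 0 < a := norm_pos_iff.2 hu0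
  have hb : 0 < b := norm_pos_iff.2 hv0
  have hp : p < a * b := by
    rcases lt_or_eq_of_le (real_inner_le_norm u v) with h | h
    · exact h
    · exfalso
      have h2 : ‖v‖ • u + (-‖u‖) • v = 0 := by
        rw [neg_smul, ← inner_eq_norm_mul_iff_real.1 h]; abel
      have := (hli _ _ h2).1
      exact hv0 (norm_eq_zero.1 this)
  -- express w two ways
  have hw1 : w = m • u + (n*x) • v := by
    rw [hw_def, hu_def, hv_def, ← hme, ← hxe]
    match_scalars
    all_goals first
      | ring1
      | linear_combination n * hxy + hmn
  have hw2 : w = (n₂*x₂) • u + m₂ • v := by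
    rw [hw_def, hu_def, hv_def, ← hme₂, ← hxe₂]
    match_scalars
    all_goals first
      | ring1
      | linear_combination n₂ * hxy₂ + hmn₂
  have hmatch : (m - n₂*x₂) • u + (n*x - m₂) • v = 0 := by
    have h9 : (m - n₂*x₂) • u + (n*x - m₂) • v
        = (m • u + (n*x) • v) - ((n₂*x₂) • u + m₂ • v) := by module
    rw [h9, ← hw1, ← hw2, sub_self]
  obtain ⟨hm1, hm2'⟩ := hli _ _ hmatch
  -- bisector condition: m * a = (n*x) * b
  have hcos := congrArg Real.cos hbis
  rw [EuclideanGeometry.angle, EuclideanGeometry.angle, InnerProductGeometry.cos_angle,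
    InnerProductGeometry.cos_angle, vsub_eq_sub, vsub_eq_sub, vsub_eq_sub] at hcos
  rw [← hu_def, ← hv_def, ← hw_def, ← ha_def, ← hb_def] at hcos
  have hwpos : (0:ℝ) < ‖w‖ := norm_pos_iff.2 hw0
  have hkey : ⟪u, w⟫ * b = ⟪w, v⟫ * a := by
    rw [div_eq_div_iff (by positivity) (by positivity)] at hcos
    have h5 : (⟪u, w⟫ * b - ⟪w, v⟫ * a) * ‖w‖ = 0 := by linear_combination hcos
    rcases mul_eq_zero.1 h5 with h | h
    · linarith
    · exact absurd h (ne_of_gt hwpos)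
  have hiuw : ⟪u, w⟫ = m * a^2 + (n*x) * p := by
    rw [hw1, inner_add_right, real_inner_smul_right, real_inner_smul_right,
      real_inner_self_eq_norm_sq]
  have hiwv : ⟪w, v⟫ = m * p + (n*x) * b^2 := by
    rw [hw1, inner_add_left, real_inner_smul_left, real_inner_smul_left,
      real_inner_self_eq_norm_sq, hp_def, hb_def, real_inner_comm v u]
  have h6 : (a*b - p) * (m*a - (n*x)*b) = 0 := by
    rw [hiuw, hiwv] at hkey; linear_combination hkey
  have hmx : m * a = (n*x) * b := by
    rcases mul_eq_zero.1 h6 with h | h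
    · linarith
    · linarith
  -- cevian lengths
  have e1 : (dist A A₁)^2 = a^2 - 2*x*p + x^2*b^2 := by
    have hA1 : A - A₁ = u - x • v := by
      rw [hu_def, hv_def, ← hxe]
      match_scalars
      all_goals first
        | ring1
        | linear_combination -hxy
        | linear_combination -2*hxy
    rw [dist_eq_norm, hA1, norm_sub_sq_real, real_inner_smul_right, norm_smul,
      Real.norm_eq_abs, mul_pow, sq_abs]
    ring
  have e2 : (dist B B₁)^2 = b^2 - 2*x₂*p + x₂^2*a^2 := by
    have hB1 : B - B₁ = v - x₂ • u := by
      rw [hu_def, hv_def, ← hxe₂]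
      match_scalars
      all_goals first
        | ring1
        | linear_combination -hxy₂
        | linear_combination -2*hxy₂
    rw [dist_eq_norm, hB1, norm_sub_sq_real, real_inner_smul_right, norm_smul,
      Real.norm_eq_abs, mul_pow, sq_abs, real_inner_comm]
    ring
  have hsq : a^2 - 2*x*p + x^2*b^2 = b^2 - 2*x₂*p + x₂^2*a^2 := by
    rw [← e1, ← e2, hlen]
  -- comparison identities
  have key : (x - x₂)*n₂ = y*(n*x - m) := by
    linear_combination hm1 + x*hmn₂ + x*hm2' - (n*x)*hxy - x*hmn + m*hxy
  have key2 : (x₂*a - x*b)*n₂ = x*b*(n - n₂) := by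
    linear_combination (-a)*hm1 + hmx
  have hx1 : x < 1 := by linarith
  have hx₂1 : x₂ < 1 := by linarith
  -- conclude
  have hCA : dist C A = a := by rw [dist_comm, dist_eq_norm, ← hu_def, ha_def]
  have hCB : dist C B = b := by rw [dist_comm, dist_eq_norm, ← hv_def, hb_def]
  rw [hCA, hCB]
  rcases lt_trichotomy a b with hab | hab | hab
  · exfalso
    have h1 : (n*x)*a < (n*x)*b := mul_lt_mul_of_pos_left hab (mul_pos hn hx)
    have hnxm : n*x < m := by
      have h2 : (n*x)*a < m*a := by linarith
      exact lt_of_mul_lt_mul_right h2 ha.le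
    have hn₂n : n ≤ n₂ := by linarith [hm2', hmn, hmn₂]
    have hxx : x ≤ x₂ := by
      by_contra hcon
      push_neg at hcon
      have h3 : 0 < (x - x₂)*n₂ := mul_pos (by linarith) hn₂
      have h4 : y*(n*x - m) < 0 := mul_neg_of_pos_of_neg hy (by linarith)
      linarith [key]
    have hk : x₂*a ≤ x*b := by
      by_contra hcon
      push_neg at hcon
      have h3 : 0 < (x₂*a - x*b)*n₂ := mul_pos (by linarith) hn₂
      have h4 : x*b*(n - n₂) ≤ 0 :=
        mul_nonpos_of_nonneg_of_nonpos (by positivity) (by linarith)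
      linarith [key2]
    have hc := cevian_aux b a p x₂ x hb ha (by rw [mul_comm]; exact hp) hx₂1 hx1 hxx hk hab
    linarith [hsq, hc]
  · exact hab
  · exfalso
    have h1 : (n*x)*b < (n*x)*a := mul_lt_mul_of_pos_left hab (mul_pos hn hx)
    have hnxm : m < n*x := by
      have h2 : m*a < (n*x)*a := by linarith
      exact lt_of_mul_lt_mul_right h2 ha.le
    have hn₂n : n₂ ≤ n := by linarith [hm2', hmn, hmn₂]
    have hxx : x₂ ≤ x := by
      by_contra hcon
      push_neg at hcon
      have h3 : (x - x₂)*n₂ < 0 := mul_neg_of_neg_of_pos (by linarith) hn₂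
      have h4 : 0 < y*(n*x - m) := mul_pos hy (by linarith)
      linarith [key]
    have hk : x*b ≤ x₂*a := by
      by_contra hcon
      push_neg at hcon
      have h3 : (x₂*a - x*b)*n₂ < 0 := mul_neg_of_neg_of_pos (by linarith) hn₂
      have h4 : 0 ≤ x*b*(n - n₂) :=
        mul_nonneg (by positivity) (by linarith)
      linarith [key2]
    have hc := cevian_aux a b p x x₂ ha hb hp hx1 hx₂1 hxx hk hab
    linarith [hsq, hc]
end

section
/- Let ABC be a nondegenerate triangle in the Euclidean plane, let A₁ be the point of the open segment BC with ∠BAA₁ = ∠A₁AC (foot of the internal bisector from A), and let B₁ be the point of the open segment AC with ∠ABB₁ = ∠B₁BC (foot of the internal bisector from B). Then dist A A₁ = dist B B₁ if and only if dist C A = dist C B. (Theorem 3.10: the equal internal bisectors theorem in biconditional form.) -/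
open EuclideanGeometry

local notation "⟪" x ", " y "⟫" => @inner ℝ _ _ x y

/-- Key computation: the square of the length of the internal bisector from `A`. -/
private lemma bisector_sq (A B C P : EuclideanSpace ℝ (Fin 2))
    (hcol : ¬ Collinear ℝ ({A, B, C} : Set (EuclideanSpace ℝ (Fin 2))))
    (hP : P ∈ openSegment ℝ B C)
    (hbis : ∠ B A P = ∠ P A C) :
    dist A P ^ 2 * (dist A B + dist A C) ^ 2
      = dist A B * dist A C * ((dist A B + dist A C) ^ 2 - dist B C ^ 2) := by
  set u := B - A with hu_def
  set v := C - A with hv_def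
  have hu : ‖u‖ = dist A B := by rw [dist_eq_norm, norm_sub_rev]
  have hv : ‖v‖ = dist A C := by rw [dist_eq_norm, norm_sub_rev]
  have ha : ‖u - v‖ = dist B C := by
    rw [dist_eq_norm]; congr 1; rw [hu_def, hv_def]; abel
  -- distinctness
  have hAB : A ≠ B := by
    rintro rfl
    exact hcol (by simpa using (collinear_pair ℝ A C).subset (by intro x hx; aesop))
  have hAC : A ≠ C := by
    rintro rfl
    exact hcol ((collinear_pair ℝ A B).subset (by intro x hx; aesop))
  have hc : (0:ℝ) < ‖u‖ := by rw [hu]; exact dist_pos.2 hAB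
  have hb : (0:ℝ) < ‖v‖ := by rw [hv]; exact dist_pos.2 hAC
  -- P is a convex combination
  rw [openSegment_eq_image] at hP
  obtain ⟨t, ⟨ht0, ht1⟩, rfl⟩ := hP
  beta_reduce at hbis
  have hw_eq : (1 - t) • B + t • C - A = (1 - t) • u + t • v := by
    rw [hu_def, hv_def]; module
  set w := (1 - t) • u + t • v with hw_def
  -- P ≠ A
  have hPA : (1 - t) • B + t • C ≠ A := by
    intro h
    apply hcol
    have hwb : Wbtw ℝ B ((1 - t) • B + t • C) C :=
      mem_segment_iff_wbtw.1 (openSegment_subset_segment ℝ B C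
        (by rw [openSegment_eq_image]; exact ⟨t, ⟨ht0, ht1⟩, rfl⟩))
    have := hwb.collinear
    rw [h] at this
    rwa [Set.insert_comm] at this
  have hW : (0:ℝ) < ‖w‖ := by
    rw [← hw_eq, norm_pos_iff, sub_ne_zero]
    exact hPA
  -- inner product bound from non-collinearity
  set p : ℝ := ⟪u, v⟫ with hp_def
  have hang : Real.cos (∠ B A C) < 1 := by
    have h1 : 0 < ∠ B A C := angle_pos_of_not_collinear (by rwa [Set.insert_comm] at hcol)
    have h2 : ∠ B A C ≤ Real.pi := EuclideanGeometry.angle_le_pi B A C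
    have := Real.cos_lt_cos_of_nonneg_of_le_pi le_rfl h2 h1
    rwa [Real.cos_zero] at this
  have hcosBAC : Real.cos (∠ B A C) = p / (‖u‖ * ‖v‖) := by
    rw [EuclideanGeometry.angle, InnerProductGeometry.cos_angle]
    norm_num [vsub_eq_sub, hu_def, hv_def, hp_def]
  have hpbc : p < ‖u‖ * ‖v‖ := by
    rw [hcosBAC] at hang
    exact (div_lt_one (by positivity)).1 hang
  -- cosine equation from the bisector hypothesis
  have hcosEq := congrArg Real.cos hbis
  rw [EuclideanGeometry.angle, EuclideanGeometry.angle, InnerProductGeometry.cos_angle,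
    InnerProductGeometry.cos_angle] at hcosEq
  have hBv : B -ᵥ A = u := by simp [hu_def, vsub_eq_sub]
  have hCv : C -ᵥ A = v := by simp [hv_def, vsub_eq_sub]
  have hPv : (1 - t) • B + t • C -ᵥ A = w := by rw [vsub_eq_sub, hw_eq]
  rw [hBv, hCv, hPv] at hcosEq
  -- clear denominators
  have hcW : ‖u‖ ≠ 0 := ne_of_gt hc
  have hbW : ‖v‖ ≠ 0 := ne_of_gt hb
  have hWW : ‖w‖ ≠ 0 := ne_of_gt hW
  have e1 : ⟪u, w⟫ * (‖w‖ * ‖v‖) = ⟪w, v⟫ * (‖u‖ * ‖w‖) :=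
    (div_eq_div_iff (by positivity) (by positivity)).1 hcosEq
  have e2 : ⟪u, w⟫ * ‖v‖ = ⟪w, v⟫ * ‖u‖ := by
    have h' : (⟪u, w⟫ * ‖v‖) * ‖w‖ = (⟪w, v⟫ * ‖u‖) * ‖w‖ := by linear_combination e1
    exact mul_right_cancel₀ hWW h'
  -- expand inner products
  have hiu : ⟪u, w⟫ = (1 - t) * ‖u‖ ^ 2 + t * p := by
    rw [hw_def, inner_add_right, real_inner_smul_right, real_inner_smul_right,
      real_inner_self_eq_norm_sq, hp_def]
  have hiv : ⟪w, v⟫ = (1 - t) * p + t * ‖v‖ ^ 2 := by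
    rw [hw_def, inner_add_left, real_inner_smul_left, real_inner_smul_left,
      real_inner_self_eq_norm_sq, hp_def]
  rw [hiu, hiv] at e2
  -- deduce the ratio
  have e3 : (‖u‖ * ‖v‖ - p) * (‖u‖ - t * (‖v‖ + ‖u‖)) = 0 := by linear_combination e2
  have ht : ‖u‖ - t * (‖v‖ + ‖u‖) = 0 := by
    rcases mul_eq_zero.1 e3 with h | h
    · exact absurd h (by linarith)
    · exact h
  -- squared norm of w
  have hwsq : ‖w‖ ^ 2 = (1 - t) ^ 2 * ‖u‖ ^ 2 + 2 * ((1 - t) * t * p) + t ^ 2 * ‖v‖ ^ 2 := by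
    rw [hw_def, norm_add_sq_real, norm_smul, norm_smul, real_inner_smul_left,
      real_inner_smul_right, Real.norm_eq_abs, Real.norm_eq_abs,
      abs_of_pos (by linarith : (0:ℝ) < 1 - t), abs_of_pos ht0, ← hp_def]
    ring
  have hasq : ‖u - v‖ ^ 2 = ‖u‖ ^ 2 - 2 * p + ‖v‖ ^ 2 := norm_sub_sq_real u v
  -- finish
  have hdAP : dist A ((1 - t) • B + t • C) = ‖w‖ := by
    rw [dist_comm, dist_eq_norm, hw_eq]
  rw [hdAP, ← hu, ← hv, ← ha]
  have hclear : ‖w‖ ^ 2 * (‖v‖ + ‖u‖) ^ 2 = 2 * ‖u‖ ^ 2 * ‖v‖ ^ 2 + 2 * (‖u‖ * ‖v‖ * p) := by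
    linear_combination (‖v‖ + ‖u‖) ^ 2 * hwsq
      + (-2*‖v‖*p - ‖u‖*‖v‖^2 + 2*‖u‖^2*‖v‖ + ‖u‖^3
        + t*(2*‖v‖*p - ‖v‖^3 + 2*‖u‖*p - ‖u‖*‖v‖^2 - ‖u‖^2*‖v‖ - ‖u‖^3)) * ht
  linear_combination hclear + ‖u‖ * ‖v‖ * hasq

set_option maxHeartbeats 1000000 in
/-- **Theorem 3.10** (equal internal bisectors theorem, biconditional form). In a
nondegenerate triangle `ABC` with feet of the internal bisectors `A₁ ∈ (B,C)` and
`B₁ ∈ (A,C)`, the bisectors are equal, `dist A A₁ = dist B B₁`, if and only if the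
triangle is isosceles, `dist C A = dist C B`. -/
theorem lehmus_steiner_iff (A B C A₁ B₁ : EuclideanSpace ℝ (Fin 2))
    (hABC : AffineIndependent ℝ ![A, B, C])
    (hA₁ : A₁ ∈ openSegment ℝ B C)
    (hbisA : ∠ B A A₁ = ∠ A₁ A C)
    (hB₁ : B₁ ∈ openSegment ℝ A C)
    (hbisB : ∠ A B B₁ = ∠ B₁ B C) :
    dist A A₁ = dist B B₁ ↔ dist C A = dist C B := by
  have hcol : ¬ Collinear ℝ ({A, B, C} : Set (EuclideanSpace ℝ (Fin 2))) :=
    affineIndependent_iff_not_collinear_set.1 hABC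
  have hcol' : ¬ Collinear ℝ ({B, A, C} : Set (EuclideanSpace ℝ (Fin 2))) := by
    rwa [Set.insert_comm]
  have key1 := bisector_sq A B C A₁ hcol hA₁ hbisA
  have key2 := bisector_sq B A C B₁ hcol' hB₁ hbisB
  rw [dist_comm B A] at key2
  rw [dist_comm C A, dist_comm C B]
  -- positivity of sides
  have hAB : A ≠ B := by
    rintro rfl
    exact hcol ((collinear_pair ℝ A C).subset (by intro x hx; aesop))
  have hAC : A ≠ C := by
    rintro rfl
    exact hcol ((collinear_pair ℝ A B).subset (by intro x hx; aesop))
  have hBC : B ≠ C := by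
    rintro rfl
    exact hcol ((collinear_pair ℝ A B).subset (by intro x hx; aesop))
  have hc0 : 0 < dist A B := dist_pos.2 hAB
  have hb0 : 0 < dist A C := dist_pos.2 hAC
  have ha0 : 0 < dist B C := dist_pos.2 hBC
  have hTa : 0 ≤ dist A A₁ := dist_nonneg
  have hTb : 0 ≤ dist B B₁ := dist_nonneg
  clear hABC hA₁ hbisA hB₁ hbisB hcol hcol' hAB hAC hBC
  generalize hTadef : dist A A₁ = Ta at key1 hTa ⊢
  generalize hTbdef : dist B B₁ = Tb at key2 hTb ⊢
  generalize hadef : dist B C = a at key1 key2 ha0 ⊢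
  generalize hbdef : dist A C = b at key1 key2 hb0 ⊢
  generalize hcdef : dist A B = c at key1 key2 hc0 ⊢
  constructor
  · intro h
    subst h
    have hfac : (b - a) * (c * (a^3*b + 2*a^2*b^2 + 4*a^2*b*c + a^2*c^2 + a*b^3
        + 4*a*b^2*c + 5*a*b*c^2 + 2*a*c^3 + b^2*c^2 + 2*b*c^3 + c^4)) = 0 := by
      linear_combination (b + c)^2 * key2 - (a + c)^2 * key1
    have hHpos : 0 < c * (a^3*b + 2*a^2*b^2 + 4*a^2*b*c + a^2*c^2 + a*b^3
        + 4*a*b^2*c + 5*a*b*c^2 + 2*a*c^3 + b^2*c^2 + 2*b*c^3 + c^4) := by positivity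
    rcases mul_eq_zero.1 hfac with h' | h'
    · linarith
    · exact absurd h' (ne_of_gt hHpos)
  · intro h
    subst h
    have hsq : Ta ^ 2 * (c + b) ^ 2 = Tb ^ 2 * (c + b) ^ 2 := by
      rw [key1]; linarith [key2]
    have hcb : ((c + b) ^ 2 : ℝ) ≠ 0 := by positivity
    have := mul_right_cancel₀ hcb hsq
    nlinarith [this, hTa, hTb]
end

section
/- Let ABC be a nondegenerate triangle in the Euclidean plane, let A₁ be the point of the open segment BC with ∠BAA₁ = ∠A₁AC (foot of the internal bisector from A), and let B₁ be the point of the open segment AC with ∠ABB₁ = ∠B₁BC (foot of the internal bisector from B). Then the triangle is isosceles (dist C A = dist C B) if and only if the line through A₁ and B₁ is parallel to the line through A and B. (Proposition 3.12.) -/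
/-!
By the angle bisector theorem, the foot `A₁` divides `CB` in the ratio `CA₁ : CB = CA : (CA + AB)`
and `B₁` divides `CA` in the ratio `CB₁ : CA = CB : (CB + AB)`. By the intercept theorem `A₁B₁ ∥ AB`
exactly when these two ratios agree, which happens exactly when `CA = CB`.
-/

open EuclideanGeometry RealInnerProductSpace AffineMap

namespace InnerProductGeometry

variable {V : Type*} [NormedAddCommGroup V] [InnerProductSpace ℝ V]

/-- The angle bisector theorem in vector form; `⟪u, v⟫ < ‖u‖ * ‖v‖` says that `u` and `v` are
nonzero and do not point in the same direction. -/
theorem angle_eq_angle_smul_add_smul_iff {u v : V} (huv : ⟪u, v⟫ < ‖u‖ * ‖v‖) {p q : ℝ}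
    (hp : 0 < p) (hq : 0 < q) :
    angle u (p • u + q • v) = angle (p • u + q • v) v ↔ p * ‖u‖ = q * ‖v‖ := by
  set x := p • u + q • v
  have hu : u ≠ 0 := by rintro rfl; simp at huv
  have hv : v ≠ 0 := by rintro rfl; simp at huv
  by_cases hx : x = 0
  · -- `u` and `v` point in opposite directions, and both sides hold.
    have hpu : p • u = -(q • v) := eq_neg_of_add_eq_zero_left hx
    have hnorm := congrArg norm hpu
    rw [norm_neg, norm_smul, norm_smul, Real.norm_of_nonneg hp.le,
      Real.norm_of_nonneg hq.le] at hnorm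
    simp only [hx, angle_zero_right, angle_zero_left, hnorm]
  have hxu : ⟪u, x⟫ = p * ‖u‖ ^ 2 + q * ⟪u, v⟫ := by
    simp only [x, inner_add_right, real_inner_smul_right, real_inner_self_eq_norm_sq]
  have hxv : ⟪x, v⟫ = p * ⟪u, v⟫ + q * ‖v‖ ^ 2 := by
    simp only [x, inner_add_left, real_inner_smul_left, real_inner_self_eq_norm_sq]
  have hgap : 0 < (‖u‖ * ‖v‖ - ⟪u, v⟫) * ‖x‖ := mul_pos (by linarith) (norm_pos_iff.2 hx)
  rw [← Real.injOn_cos.eq_iff ⟨angle_nonneg _ _, angle_le_pi _ _⟩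
      ⟨angle_nonneg _ _, angle_le_pi _ _⟩, cos_angle, cos_angle, hxu, hxv,
    div_eq_div_iff (by positivity) (by positivity)]
  constructor
  · intro h
    have hfac : (p * ‖u‖ - q * ‖v‖) * ((‖u‖ * ‖v‖ - ⟪u, v⟫) * ‖x‖) = 0 := by
      linear_combination h
    linarith [(mul_eq_zero.1 hfac).resolve_right hgap.ne']
  · intro h
    linear_combination ((‖u‖ * ‖v‖ - ⟪u, v⟫) * ‖x‖) * h

end InnerProductGeometry

theorem AffineIndependent.linearIndependent_vsub_vsub {k V P : Type*} [Ring k] [AddCommGroup V]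
    [Module k V] [AddTorsor V P] {A B C : P} (h : AffineIndependent k ![A, B, C]) :
    LinearIndependent k ![A -ᵥ C, B -ᵥ C] := by
  rw [affineIndependent_iff_linearIndependent_vsub k _ (2 : Fin 3),
    ← linearIndependent_equiv (finSuccAboveEquiv (2 : Fin 3))] at h
  convert h using 1
  ext i
  fin_cases i <;> rfl

theorem Submodule.span_singleton_smul_sub_smul_eq_iff {K V : Type*} [Field K] [AddCommGroup V]
    [Module K V] {u v : V} (huv : LinearIndependent K ![u, v]) {s t : K} (hs : s ≠ 0) :
    K ∙ (s • v - t • u) = K ∙ (u - v) ↔ s = t := by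
  constructor
  · intro h
    obtain ⟨r, hr⟩ := Submodule.mem_span_singleton.1
      (h ▸ Submodule.mem_span_singleton_self (s • v - t • u))
    have hzero : (r + t) • u + (-r - s) • v = 0 := by
      linear_combination (norm := module) hr
    obtain ⟨hu, hv⟩ := LinearIndependent.pair_iff.1 huv _ _ hzero
    linear_combination -hu - hv
  · rintro rfl
    rw [show s • v - s • u = (-s) • (u - v) by module,
      Submodule.span_singleton_smul_eq (neg_ne_zero.2 hs).isUnit]

section Euclidean

variable {V P : Type*} [NormedAddCommGroup V] [InnerProductSpace ℝ V] [MetricSpace P]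
  [NormedAddTorsor V P]

/-- The intercept theorem. -/
theorem AffineIndependent.direction_affineSpan_lineMap_pair_eq_iff {A B C : P}
    (h : AffineIndependent ℝ ![A, B, C]) {s t : ℝ} (hs : s ≠ 0) :
    (affineSpan ℝ {lineMap C B s, lineMap C A t}).direction = (affineSpan ℝ {A, B}).direction ↔
      s = t := by
  rw [direction_affineSpan, direction_affineSpan, vectorSpan_pair, vectorSpan_pair, lineMap_apply,
    lineMap_apply, vadd_vsub_vadd_cancel_right, ← vsub_sub_vsub_cancel_right A B C]
  exact Submodule.span_singleton_smul_sub_smul_eq_iff h.linearIndependent_vsub_vsub hs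

/-- The angle bisector theorem. -/
theorem EuclideanGeometry.angle_eq_angle_lineMap_iff {A B C : P} (h : ¬Collinear ℝ {B, A, C}) {s : ℝ}
    (hs : s ∈ Set.Ioo 0 1) :
    ∠ B A (lineMap C B s) = ∠ (lineMap C B s) A C ↔ s * dist A B = (1 - s) * dist A C := by
  have hBA : B -ᵥ A ≠ 0 := vsub_ne_zero.2 (ne₁₂_of_not_collinear h)
  have hCA : C -ᵥ A ≠ 0 := vsub_ne_zero.2 (ne₂₃_of_not_collinear h).symm
  have hstrict : ⟪B -ᵥ A, C -ᵥ A⟫ < ‖B -ᵥ A‖ * ‖C -ᵥ A‖ :=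
    (real_inner_le_norm _ _).lt_of_ne fun heq =>
      angle_ne_zero_of_not_collinear h ((InnerProductGeometry.inner_eq_mul_norm_iff_angle_eq_zero
        hBA hCA).1 heq)
  have hfoot : lineMap C B s -ᵥ A = s • (B -ᵥ A) + (1 - s) • (C -ᵥ A) := by
    rw [lineMap_vsub, lineMap_apply_module, add_comm]
  rw [angle, angle, hfoot, dist_comm A B, dist_comm A C, dist_eq_norm_vsub V B A,
    dist_eq_norm_vsub V C A]
  exact InnerProductGeometry.angle_eq_angle_smul_add_smul_iff hstrict hs.1 (sub_pos.2 hs.2)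

end Euclidean

/-- **Proposition 3.12.** In a nondegenerate triangle `ABC` with feet of the internal
bisectors `A₁ ∈ (B,C)` and `B₁ ∈ (A,C)`, the triangle is isosceles
(`dist C A = dist C B`) if and only if the line through `A₁` and `B₁` is parallel to
the line through `A` and `B` (their direction submodules coincide). -/
theorem isosceles_iff_bisector_feet_line_parallel
    (A B C A₁ B₁ : EuclideanSpace ℝ (Fin 2))
    (hABC : AffineIndependent ℝ ![A, B, C])
    (hA₁ : A₁ ∈ openSegment ℝ B C)
    (hbisA : ∠ B A A₁ = ∠ A₁ A C)
    (hB₁ : B₁ ∈ openSegment ℝ A C)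
    (hbisB : ∠ A B B₁ = ∠ B₁ B C) :
    dist C A = dist C B ↔
      (affineSpan ℝ {A₁, B₁}).direction = (affineSpan ℝ {A, B}).direction := by
  have hcol : ¬Collinear ℝ {A, B, C} := affineIndependent_iff_not_collinear_set.1 hABC
  rw [openSegment_symm, openSegment_eq_image_lineMap] at hA₁ hB₁
  obtain ⟨s, hs, rfl⟩ := hA₁
  obtain ⟨t, ht, rfl⟩ := hB₁
  have hsA := (angle_eq_angle_lineMap_iff (by rwa [Set.insert_comm]) hs).1 hbisA
  have htB := (angle_eq_angle_lineMap_iff hcol ht).1 hbisB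
  rw [dist_comm B A] at htB
  rw [hABC.direction_affineSpan_lineMap_pair_eq_iff hs.1.ne', dist_comm C A, dist_comm C B]
  have hAB : 0 < dist A B := dist_pos.2 (ne₁₂_of_not_collinear hcol)
  have hBC : 0 < dist B C := dist_pos.2 (ne₂₃_of_not_collinear hcol)
  have key : (s - t) * (dist A B + dist B C) = (1 - s) * (dist A C - dist B C) := by
    linear_combination hsA - htB
  constructor
  · intro hiso
    rw [hiso, sub_self, mul_zero] at key
    exact sub_eq_zero.1 ((mul_eq_zero.1 key).resolve_right (by positivity))
  · rintro rfl
    rw [sub_self, zero_mul, eq_comm] at key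
    exact sub_eq_zero.1 ((mul_eq_zero.1 key).resolve_left (sub_pos.2 hs.2).ne')
end

section
/- Let ABC be a nondegenerate triangle in the Euclidean plane, let A₁ be the point of the open segment BC with ∠BAA₁ = ∠A₁AC (foot of the internal bisector from A), and let B₁ be the point of the open segment AC with ∠ABB₁ = ∠B₁BC (foot of the internal bisector from B). If dist A A₁ = dist B B₁, then the line through A₁ and B₁ is parallel to the line through A and B. (Theorem 3.13: reformulation of the Lehmus–Steiner theorem.) -/
open EuclideanGeometry RealInnerProductSpace



private lemma li_vsub_left {A B C : EuclideanSpace ℝ (Fin 2)}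
    (h : AffineIndependent ℝ ![A, B, C]) :
    LinearIndependent ℝ ![B - A, C - A] := by
  rw [LinearIndependent.pair_iff]
  intro s t hst
  have h0 := affineIndependent_iff.1 h Finset.univ ![-(s + t), s, t]
    (by simp [Fin.sum_univ_three])
    (by
      simp only [Fin.sum_univ_three, Matrix.cons_val_zero, Matrix.cons_val_one,
        Matrix.head_cons, Matrix.cons_val_two, Matrix.tail_cons]
      have h1 : (-(s + t)) • A + s • B + t • C = s • (B - A) + t • (C - A) := by module
      rw [h1, hst])
  constructor
  · simpa using h0 1 (Finset.mem_univ _)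
  · simpa using h0 2 (Finset.mem_univ _)

private lemma li_vsub_mid {A B C : EuclideanSpace ℝ (Fin 2)}
    (h : AffineIndependent ℝ ![A, B, C]) :
    LinearIndependent ℝ ![A - B, C - B] := by
  rw [LinearIndependent.pair_iff]
  intro s t hst
  have h0 := affineIndependent_iff.1 h Finset.univ ![s, -(s + t), t]
    (by simp [Fin.sum_univ_three])
    (by
      simp only [Fin.sum_univ_three, Matrix.cons_val_zero, Matrix.cons_val_one,
        Matrix.head_cons, Matrix.cons_val_two, Matrix.tail_cons]
      have h1 : s • A + (-(s + t)) • B + t • C = s • (A - B) + t • (C - B) := by module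
      rw [h1, hst])
  constructor
  · simpa using h0 0 (Finset.mem_univ _)
  · simpa using h0 2 (Finset.mem_univ _)

private lemma inner_lt_of_li {u v : EuclideanSpace ℝ (Fin 2)}
    (h : LinearIndependent ℝ ![u, v]) : ⟪u, v⟫ < ‖u‖ * ‖v‖ := by
  have hu : u ≠ 0 := by simpa using h.ne_zero 0
  rw [inner_lt_norm_mul_iff_real]
  intro heq
  have h2 := (LinearIndependent.pair_iff.1 h ‖v‖ (-‖u‖)
    (by rw [neg_smul, ← heq]; abel)).2
  exact hu (norm_eq_zero.1 (neg_eq_zero.1 h2))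


private lemma foot_ratio {u v : EuclideanSpace ℝ (Fin 2)} (hu : u ≠ 0) (hv : v ≠ 0)
    (hcs : ⟪u, v⟫ < ‖u‖ * ‖v‖) {x y : ℝ} (hxy : x + y = 1)
    (hw : x • u + y • v ≠ 0)
    (hang : InnerProductGeometry.angle u (x • u + y • v)
          = InnerProductGeometry.angle (x • u + y • v) v) :
    y * (‖u‖ + ‖v‖) = ‖u‖ ∧
      ‖x • u + y • v‖ ^ 2 * (‖u‖ + ‖v‖) ^ 2 = 2 * ‖u‖ * ‖v‖ * (‖u‖ * ‖v‖ + ⟪u, v⟫) := by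
  set w := x • u + y • v with hwdef
  have hu' : (0:ℝ) < ‖u‖ := norm_pos_iff.2 hu
  have hv' : (0:ℝ) < ‖v‖ := norm_pos_iff.2 hv
  have hw' : (0:ℝ) < ‖w‖ := norm_pos_iff.2 hw
  have h1 := InnerProductGeometry.cos_angle u w
  have h2 := InnerProductGeometry.cos_angle w v
  rw [hang, h2] at h1
  rw [div_eq_div_iff (by positivity) (by positivity)] at h1
  have key : ⟪w, v⟫ * ‖u‖ = ⟪u, w⟫ * ‖v‖ := by
    apply mul_right_cancel₀ hw'.ne'
    linear_combination h1
  have e1 : ⟪u, w⟫ = x * ‖u‖ ^ 2 + y * ⟪u, v⟫ := by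
    rw [hwdef, inner_add_right, real_inner_smul_right, real_inner_smul_right,
      real_inner_self_eq_norm_sq]
  have e2 : ⟪w, v⟫ = x * ⟪u, v⟫ + y * ‖v‖ ^ 2 := by
    rw [hwdef, inner_add_left, real_inner_smul_left, real_inner_smul_left,
      real_inner_self_eq_norm_sq]
  rw [e1, e2] at key
  have hfac : (x * ‖u‖ - y * ‖v‖) * (‖u‖ * ‖v‖ - ⟪u, v⟫) = 0 := by
    linear_combination -key
  have hratio : y * (‖u‖ + ‖v‖) = ‖u‖ := by
    rcases mul_eq_zero.1 hfac with h | h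
    · linear_combination ‖u‖ * hxy - h
    · exact absurd h (sub_ne_zero.2 hcs.ne')
  refine ⟨hratio, ?_⟩
  have hN : ‖w‖ ^ 2 = x ^ 2 * ‖u‖ ^ 2 + 2 * (x * y) * ⟪u, v⟫ + y ^ 2 * ‖v‖ ^ 2 := by
    rw [hwdef, norm_add_sq_real, norm_smul, norm_smul, real_inner_smul_left,
      real_inner_smul_right]
    simp only [Real.norm_eq_abs, mul_pow, sq_abs]
    ring
  linear_combination (‖u‖ + ‖v‖) ^ 2 * hN +
    (‖u‖^4 + 2*‖v‖*‖u‖^3 + ‖v‖^2*‖u‖^2 + 2*y*‖u‖^2*⟪u, v⟫ - y*‖u‖^4 + 4*y*‖v‖*‖u‖*⟪u, v⟫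
      - 2*y*‖v‖*‖u‖^3 + 2*y*‖v‖^2*⟪u, v⟫ - y*‖v‖^2*‖u‖^2 + x*‖u‖^4 + 2*x*‖v‖*‖u‖^3
      + x*‖v‖^2*‖u‖^2) * hxy +
    (-‖u‖^3 + 2*‖v‖*⟪u, v⟫ - 2*‖v‖*‖u‖^2 + ‖v‖^2*‖u‖ - 2*y*‖u‖*⟪u, v⟫ + y*‖u‖^3
      - 2*y*‖v‖*⟪u, v⟫ + y*‖v‖*‖u‖^2 + y*‖v‖^2*‖u‖ + y*‖v‖^3) * hratio


set_option maxHeartbeats 1000000 in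

/-- **Theorem 3.13** (reformulation of the Lehmus–Steiner theorem). In a nondegenerate
triangle `ABC` with feet of the internal bisectors `A₁ ∈ (B,C)` and `B₁ ∈ (A,C)`, if
`dist A A₁ = dist B B₁` then the line through `A₁` and `B₁` is parallel to the line
through `A` and `B` (their direction submodules coincide). -/
theorem bisector_feet_line_parallel_of_equal_bisectors
    (A B C A₁ B₁ : EuclideanSpace ℝ (Fin 2))
    (hABC : AffineIndependent ℝ ![A, B, C])
    (hA₁ : A₁ ∈ openSegment ℝ B C)
    (hbisA : ∠ B A A₁ = ∠ A₁ A C)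
    (hB₁ : B₁ ∈ openSegment ℝ A C)
    (hbisB : ∠ A B B₁ = ∠ B₁ B C)
    (hlen : dist A A₁ = dist B B₁) :
    (affineSpan ℝ {A₁, B₁}).direction = (affineSpan ℝ {A, B}).direction := by
  obtain ⟨x, y, hx, hy, hxy, hA1⟩ := hA₁
  obtain ⟨x', y', hx', hy', hxy', hB1⟩ := hB₁
  have hliA : LinearIndependent ℝ ![B - A, C - A] := li_vsub_left hABC
  have hliB : LinearIndependent ℝ ![A - B, C - B] := li_vsub_mid hABC
  have hcsA : ⟪B - A, C - A⟫ < ‖B - A‖ * ‖C - A‖ := inner_lt_of_li hliA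
  have hcsB : ⟪A - B, C - B⟫ < ‖A - B‖ * ‖C - B‖ := inner_lt_of_li hliB
  have huA : B - A ≠ 0 := by simpa using hliA.ne_zero 0
  have hvA : C - A ≠ 0 := by simpa using hliA.ne_zero 1
  have huB : A - B ≠ 0 := by simpa using hliB.ne_zero 0
  have hvB : C - B ≠ 0 := by simpa using hliB.ne_zero 1
  -- decompositions of the feet
  have hA1A : A₁ - A = x • (B - A) + y • (C - A) := by
    rw [← hA1]; match_scalars <;> linarith
  have hB1B : B₁ - B = x' • (A - B) + y' • (C - B) := by
    rw [← hB1]; match_scalars <;> linarith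
  -- nonvanishing of the bisector vectors
  have hwA : x • (B - A) + y • (C - A) ≠ 0 := fun h0 =>
    hx.ne' (LinearIndependent.pair_iff.1 hliA x y h0).1
  have hwB : x' • (A - B) + y' • (C - B) ≠ 0 := fun h0 =>
    hx'.ne' (LinearIndependent.pair_iff.1 hliB x' y' h0).1
  -- angle hypotheses in vector form
  have hangA : InnerProductGeometry.angle (B - A) (x • (B - A) + y • (C - A))
      = InnerProductGeometry.angle (x • (B - A) + y • (C - A)) (C - A) := by
    rw [← hA1A]
    simpa [EuclideanGeometry.angle, vsub_eq_sub] using hbisA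
  have hangB : InnerProductGeometry.angle (A - B) (x' • (A - B) + y' • (C - B))
      = InnerProductGeometry.angle (x' • (A - B) + y' • (C - B)) (C - B) := by
    rw [← hB1B]
    simpa [EuclideanGeometry.angle, vsub_eq_sub] using hbisB
  obtain ⟨hrA, hLA⟩ := foot_ratio huA hvA hcsA hxy hwA hangA
  obtain ⟨hrB, hLB⟩ := foot_ratio huB hvB hcsB hxy' hwB hangB
  -- equal lengths
  have hl2 : ‖x • (B - A) + y • (C - A)‖ ^ 2 = ‖x' • (A - B) + y' • (C - B)‖ ^ 2 := by
    rw [← hA1A, ← hB1B, ← dist_eq_norm, ← dist_eq_norm, dist_comm A₁ A, dist_comm B₁ B, hlen]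
  -- pass to scalars
  rw [norm_sub_rev A B] at hrB hLB hcsB
  set a := ‖C - B‖ with ha_def
  set b := ‖C - A‖ with hb_def
  set c := ‖B - A‖ with hc_def
  set p := (⟪B - A, C - A⟫ : ℝ) with hp_def
  set q := (⟪A - B, C - B⟫ : ℝ) with hq_def
  have ha : (0:ℝ) < a := norm_pos_iff.2 hvB
  have hb : (0:ℝ) < b := norm_pos_iff.2 hvA
  have hc : (0:ℝ) < c := norm_pos_iff.2 huA
  have ha2 : a ^ 2 = b ^ 2 + c ^ 2 - 2 * p := by
    rw [ha_def, hb_def, hc_def, hp_def]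
    rw [show C - B = (C - A) - (B - A) by abel, norm_sub_sq_real, real_inner_comm]
    ring
  have hqe : q = c ^ 2 - p := by
    rw [hq_def, hc_def, hp_def]
    rw [show A - B = -(B - A) by abel, show C - B = (C - A) - (B - A) by abel,
      inner_neg_left, inner_sub_right, real_inner_self_eq_norm_sq]
    ring
  have hp2 : p = (b ^ 2 + c ^ 2 - a ^ 2) / 2 := by linarith
  have hq2 : q = (a ^ 2 + c ^ 2 - b ^ 2) / 2 := by linarith
  -- the central length equation
  have heq : 2 * c * b * (c * b + p) * (c + a) ^ 2 = 2 * c * a * (c * a + q) * (c + b) ^ 2 := by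
    linear_combination (-(c + a) ^ 2) * hLA + (c + b) ^ 2 * hLB + (c + a) ^ 2 * (c + b) ^ 2 * hl2
  -- Steiner–Lehmus: a = b
  have hG : (0:ℝ) < c^5 + 2*b*c^4 + b^2*c^3 + 2*a*c^4 + 5*a*b*c^3 + 4*a*b^2*c^2 + a*b^3*c
      + a^2*c^3 + 4*a^2*b*c^2 + 2*a^2*b^2*c + a^3*b*c := by
    have m1 : (0:ℝ) < c^5 := pow_pos hc 5
    have m2 : (0:ℝ) < b*c^4 := mul_pos hb (pow_pos hc 4)
    have m3 : (0:ℝ) < b^2*c^3 := mul_pos (pow_pos hb 2) (pow_pos hc 3)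
    have m4 : (0:ℝ) < a*c^4 := mul_pos ha (pow_pos hc 4)
    have m5 : (0:ℝ) < a*b*c^3 := mul_pos (mul_pos ha hb) (pow_pos hc 3)
    have m6 : (0:ℝ) < a*b^2*c^2 := mul_pos (mul_pos ha (pow_pos hb 2)) (pow_pos hc 2)
    have m7 : (0:ℝ) < a*b^3*c := mul_pos (mul_pos ha (pow_pos hb 3)) hc
    have m8 : (0:ℝ) < a^2*c^3 := mul_pos (pow_pos ha 2) (pow_pos hc 3)
    have m9 : (0:ℝ) < a^2*b*c^2 := mul_pos (mul_pos (pow_pos ha 2) hb) (pow_pos hc 2)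
    have m10 : (0:ℝ) < a^2*b^2*c := mul_pos (mul_pos (pow_pos ha 2) (pow_pos hb 2)) hc
    have m11 : (0:ℝ) < a^3*b*c := mul_pos (mul_pos (pow_pos ha 3) hb) hc
    linarith
  have hF : (b - a) * (c^5 + 2*b*c^4 + b^2*c^3 + 2*a*c^4 + 5*a*b*c^3 + 4*a*b^2*c^2 + a*b^3*c
      + a^2*c^3 + 4*a^2*b*c^2 + 2*a^2*b^2*c + a^3*b*c) = 0 := by
    linear_combination heq - 2*c*b*(c+a)^2 * hp2 + 2*c*a*(c+b)^2 * hq2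
  have hab : a = b := by
    rcases mul_eq_zero.1 hF with h | h
    · linarith
    · exact absurd h hG.ne'
  -- equal coefficients
  have hcb : (0:ℝ) < c + b := by linarith
  have hy_eq : y = y' := by
    apply mul_right_cancel₀ hcb.ne'
    rw [hrA]
    rw [hab] at hrB
    rw [hrB]
  have hx_eq : x = x' := by linarith
  have hd : A₁ - B₁ = (-x) • (A - B) := by
    rw [← hA1, ← hB1]
    match_scalars <;> linarith
  rw [direction_affineSpan, direction_affineSpan, vectorSpan_pair, vectorSpan_pair,
    vsub_eq_sub, vsub_eq_sub, hd]
  exact Submodule.span_singleton_smul_eq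
    (isUnit_iff_ne_zero.2 (neg_ne_zero.2 hx.ne')) _
end
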